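/- Let p be a blp of length n ≥ 3 whose last row s_n has length 3 and whose first entry a = s_{n,1} is nonzero. Then p is copyable, the copied rows are rows a, a+1, …, n−1 of p, and each copied row is obtained from the corresponding row of p by preserving all entries smaller than a and increasing every other entry by n − a. -/

import Mathlib

/-! ## Basic Laver patterns (raw data) -/

/-- `negGet l k` is the `k`-th entry of `l` counted from the end (1-indexed),
    i.e. `l_{-k}` in the paper's notation. -/
def negGet (l : List ℕ) (k : ℕ) : ℕ := l.getD (l.length - k) 0

/-- Raw data of a basic Laver pattern: a list of rows and a list of step lengths. -/
structure Blp where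
  rows : List (List ℕ)
  steps : List ℕ

namespace Blp

/-- The length (number of rows) of the pattern. -/
def n (p : Blp) : ℕ := p.rows.length

/-- The `i`-th row (1-indexed). -/
def rowOf (p : Blp) (i : ℕ) : List ℕ := p.rows.getD (i - 1) []

/-- The step length of row `i` (1-indexed). -/
def stepOf (p : Blp) (i : ℕ) : ℕ := p.steps.getD (i - 1) 0

def lastRow (p : Blp) : List ℕ := p.rows.getLastD []

def lastStep (p : Blp) : ℕ := p.steps.getLastD 0

/-- `p` is a basic Laver pattern (blp). -/
def IsValid (p : Blp) : Prop :=
  2 ≤ p.n ∧ p.steps.length = p.n ∧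
  p.rowOf 1 = [0, 1, 2] ∧ p.rowOf 2 = [0, 1, 2, 3] ∧
  ∀ i, 1 ≤ i → i ≤ p.n →
    List.Chain' (· < ·) (p.rowOf i) ∧
    3 ≤ (p.rowOf i).length ∧
    negGet (p.rowOf i) 2 = i ∧ negGet (p.rowOf i) 1 = i + 1 ∧
    (Odd (p.rowOf i).length → p.stepOf i = ((p.rowOf i).length - 1) / 2) ∧
    ((p.rowOf i).length = 4 → p.stepOf i = 1) ∧
    (Even (p.rowOf i).length → 4 < (p.rowOf i).length →
      p.stepOf i = (p.rowOf i).length / 2 ∨ p.stepOf i = (p.rowOf i).length / 2 - 1)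

/-- Delete the last row. -/
def del (p : Blp) : Blp := ⟨p.rows.dropLast, p.steps.dropLast⟩

end Blp

/-- The partial map `ap(s,t,ℓ)` is defined. -/
def ApDefined (s t : List ℕ) (ℓ : ℕ) : Prop :=
  0 < negGet t (ℓ + 2) ∧ ℓ + 2 ≤ t.length ∧
  (∀ x ∈ s, x ≤ negGet t (ℓ + 1)) ∧
  (∀ x ∈ s, t.headD 0 ≤ x → x < negGet t (ℓ + 2) → x ∈ t)

/-- The effect of `ap(·,t,ℓ)` on a single entry. -/
def apEntry (t : List ℕ) (ℓ x : ℕ) : ℕ :=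
  if x < t.headD 0 then x
  else if x < negGet t (ℓ + 2) then t.getD (t.idxOf x + ℓ) 0
  else negGet t 2 + x - negGet t (ℓ + 2)

/-- The sequence `ap(s,t,ℓ)` (total function; meaningful when `ApDefined s t ℓ`). -/
def apF (s t : List ℕ) (ℓ : ℕ) : List ℕ := s.map (apEntry t ℓ)

namespace Blp

/-- `a = s_{n,-ℓ_n-2}` in the definition of the copying operation. -/
def copyA (p : Blp) : ℕ := negGet p.lastRow (p.lastStep + 2)

/-- `b = s_{n,-ℓ_n-1} - 1` in the definition of the copying operation. -/
def copyB (p : Blp) : ℕ := negGet p.lastRow (p.lastStep + 1) - 1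

/-- `p` is copyable. -/
def Copyable (p : Blp) : Prop :=
  3 ≤ p.n ∧
  ∀ i ≤ p.copyB - p.copyA, ApDefined (p.rowOf (p.copyA + i)) p.lastRow p.lastStep

/-- `p.Copied` (meaningful when `p` is copyable). -/
def Copied (p : Blp) : Blp :=
  ⟨p.rows.dropLast ++
     (List.range (p.copyB - p.copyA + 1)).map
       (fun i => apF (p.rowOf (p.copyA + i)) p.lastRow p.lastStep),
   p.steps.dropLast ++
     (List.range (p.copyB - p.copyA + 1)).map (fun i => p.stepOf (p.copyA + i))⟩

/-- The zero blp is the unique blp of length 2. -/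
def IsZero (p : Blp) : Prop := p.n = 2

/-- `p` is of successor type. -/
def IsSuccType (p : Blp) : Prop := p.lastRow.take 3 = [0, 1, 2] ∧ p.lastRow.length = 5

/-- `p` is of limit type. -/
def IsLimitType (p : Blp) : Prop :=
  p.lastRow.take 3 = [0, 1, 2] ∧ p.lastRow.length = 6 ∧ p.lastStep = 3

/-- Append the auxiliary row `(a, n'+1, n'+2)` (with step length 1) to `q`. -/
def eExtend (q : Blp) (a : ℕ) : Blp :=
  ⟨q.rows ++ [[a, q.n + 1, q.n + 2]], q.steps ++ [1]⟩

/-- The operation `p.E(m)` for `p` of limit or successor type. -/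
def Eop (p : Blp) : ℕ → Blp
  | 0 => p.del
  | m + 1 => (eExtend (p.Eop m) (negGet p.lastRow 3)).Copied

end Blp

/-- Row `i + r` in the completion operation `comp(p,i,T)`:
insert `t_1, …, t_{r+1}` after position `ℓ` of `s` and replace the last entry by
`i+1, …, i+r+1`. -/
def compRow (s : List ℕ) (ℓ i r : ℕ) (T : List ℕ) : List ℕ :=
  (s.take ℓ ++ T.take (r + 1) ++ s.drop ℓ).dropLast ++
    (List.range (r + 1)).map (fun j => i + 1 + j)

namespace Blp

/-- The completion operation `comp(p,i,T)`. -/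
def comp (p : Blp) (i : ℕ) (T : List ℕ) : Blp :=
  ⟨p.rows.take (i - 1) ++
     (List.range (T.length + 1)).map (fun r => compRow (p.rowOf i) (p.stepOf i) i r T) ++
     (p.rows.drop i).map (List.map (fun x => if i < x then x + T.length else x)),
   p.steps.take (i - 1) ++
     ((List.range T.length).map (fun r => p.stepOf i + r + 1) ++ [p.stepOf i + T.length]) ++
     p.steps.drop i⟩

/-- The (descending) chain `x_1, x_2, …` with `x_{r+1} = s_{x_r,-3}`, stopping
as soon as the value is `≤ lo` (that final value is not collected). -/
def descChain (p : Blp) (lo : ℕ) : ℕ → ℕ → List ℕ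
  | 0, _ => []
  | fuel + 1, x =>
    let nx := negGet (p.rowOf x) 3
    if nx ≤ lo then [] else nx :: p.descChain lo fuel nx

/-- `fullcomp(p,i)` for a suitable row `i`. -/
def fullcomp (p : Blp) (i : ℕ) : Blp :=
  p.comp i
    ((p.descChain ((p.rowOf i).getD (p.stepOf i - 1) 0)
        ((p.rowOf i).getD (p.stepOf i) 0 + 1) ((p.rowOf i).getD (p.stepOf i) 0)).reverse)

/-- The (increasing) list of indices of suitable rows (rows of odd length `≥ 5`). -/
def suitableIdx (p : Blp) : List ℕ :=
  (List.range p.n).filterMap fun j =>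
    if 5 ≤ (p.rowOf (j + 1)).length ∧ (p.rowOf (j + 1)).length % 2 = 1 then some (j + 1)
    else none

/-- The modification operation `p.M`: apply `fullcomp` to `p.Copied` at the suitable
indices of `p`, in decreasing order. -/
def Mop (p : Blp) : Blp := p.suitableIdx.reverse.foldl (fun q i => q.fullcomp i) p.Copied

end Blp

/- The graph of the partial recursive function `f(p,m)` of the paper
(`FRel p m r` means `f(p,m)` is defined with value `r`), together with the graph
`FIter q k x r` of the `k`-fold iterate of `x ↦ f(q,x)` at `x`. -/
mutual
  inductive FRel : Blp → ℕ → ℕ → Prop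
    | zero (p : Blp) (m : ℕ) : p.IsZero → FRel p m (m * 2 ^ m)
    | notCopyable (p : Blp) (m r : ℕ) :
        ¬p.IsZero → ¬p.Copyable → FRel p.del m r → FRel p m r
    | succ (p : Blp) (m r : ℕ) :
        ¬p.IsZero → p.Copyable → p.IsSuccType → FIter p.del (2 ^ m) m r → FRel p m r
    | limit (p : Blp) (m r : ℕ) :
        ¬p.IsZero → p.Copyable → ¬p.IsSuccType → p.IsLimitType →
        FRel (p.Eop m) m r → FRel p m r
    | trans (p : Blp) (m r : ℕ) :
        ¬p.IsZero → p.Copyable → ¬p.IsSuccType → ¬p.IsLimitType →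
        FRel p.Mop m r → FRel p m r
  inductive FIter : Blp → ℕ → ℕ → ℕ → Prop
    | base (q : Blp) (x : ℕ) : FIter q 0 x x
    | step (q : Blp) (k x y r : ℕ) : FIter q k x y → FRel q y r → FIter q (k + 1) x r
end

/-! ## Ordinals below ε₀ via `ONote`, fundamental sequences, pattern sequences -/

/-- `o` denotes a successor ordinal (for `o` in normal form). -/
def isSuccO : ONote → Bool
  | .zero => false
  | .oadd e _ .zero => decide (e = ONote.zero)
  | .oadd _ _ (.oadd e' c' a') => isSuccO (.oadd e' c' a')

/-- The predecessor of a (successor) ordinal notation. -/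
def predO : ONote → ONote
  | .zero => .zero
  | .oadd e c .zero => if e = ONote.zero then ONote.ofNat ((c : ℕ) - 1) else .oadd e c .zero
  | .oadd e c (.oadd e' c' a') => .oadd e c (predO (.oadd e' c' a'))

/-- The canonical fundamental sequence: `fsO o k` is `o[k]` (meaningful for `o` in
normal form denoting a limit ordinal), obtained from the unique decomposition
`o = β + ω^γ` via `(ω^(δ+1))[k] = ω^δ·k` and `(ω^γ)[k] = ω^(γ[k])` for `γ` limit. -/
def fsO : ONote → ℕ → ONote
  | .zero, _ => .zero
  | .oadd e c (.oadd e' c' a'), k => .oadd e c (fsO (.oadd e' c' a') k)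
  | .oadd e c .zero, k =>
    let t : ONote :=
      if e = ONote.zero then .zero
      else if isSuccO e then
        (if h : k = 0 then .zero else .oadd (predO e) ⟨k, Nat.pos_of_ne_zero h⟩ .zero)
      else .oadd (fsO e k) 1 .zero
    if c = 1 then t else .oadd e (c - 1) t

/-- Auxiliary for the pattern sequence: process the Cantor normal form terms of `o`
from the left, starting from the already-computed list `L`. -/
def psFrom : List ℕ → ONote → List ℕ
  | L, .zero => L
  | L, .oadd e c a =>
    let pe := psFrom [] e
    let step : List ℕ → List ℕ := fun M =>
      if e = ONote.zero then M ++ [0]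
      else M ++ [0] ++ pe.map (· + (M.length + 1)) ++ [M.length + 1]
    psFrom (step^[(c : ℕ)] L) a

/-- The pattern sequence `ps(α)` of an ordinal `α < ε₀`. -/
def psO (o : ONote) : List ℕ := psFrom [] o

/-- The fundamental sequence for `ε₀` itself: `ε₀[0] = 1`, `ε₀[n+1] = ω^(ε₀[n])`. -/
def eps0fs : ℕ → ONote
  | 0 => 1
  | k + 1 => .oadd (eps0fs k) 1 .zero

/-- The graph of the Hardy hierarchy `H_α(n)` for `α < ε₀`:
`HardyRel o n r` means `H_{repr o}(n) = r`. -/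
inductive HardyRel : ONote → ℕ → ℕ → Prop
  | zero (n : ℕ) : HardyRel 0 n n
  | succ (o : ONote) (n r : ℕ) : HardyRel o (n + 1) r → HardyRel (o + 1) n r
  | limit (o : ONote) (n r : ℕ) :
      Order.IsSuccLimit (ONote.repr o) → HardyRel (fsO o n) (n + 1) r → HardyRel o n r

/- The graph of the `m`-hierarchy `m(α,n)` for `α < ε₀` (`MRel o n r` means
`m(repr o, n) = r`), together with the graph `MIter o k x r` of the `k`-fold
iterate of `x ↦ m(repr o, x)` at `x`. -/
mutual
  inductive MRel : ONote → ℕ → ℕ → Prop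
    | zero (n : ℕ) : MRel 0 n (n ^ n)
    | succ (o : ONote) (n r : ℕ) : MIter o n n r → MRel (o + 1) n r
    | limit (o : ONote) (n r : ℕ) :
        Order.IsSuccLimit (ONote.repr o) → MRel (fsO o n) n r → MRel o n r
  inductive MIter : ONote → ℕ → ℕ → ℕ → Prop
    | base (o : ONote) (x : ℕ) : MIter o 0 x x
    | step (o : ONote) (k x y r : ℕ) : MIter o k x y → MRel o y r → MIter o (k + 1) x r
end

/-! ## The specific patterns `q_n`, `p_α` -/

/-- The blp `q_n` with `2^n + 4` rows. -/
def qBlp (n : ℕ) : Blp :=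
  ⟨[[0, 1, 2], [0, 1, 2, 3], [0, 1, 2, 3, 4]] ++
     (List.range (2 ^ n + 1)).map (fun j => [0, 1, 2, j + 3, j + 4, j + 5]),
   [1, 1, 2] ++ List.replicate (2 ^ n + 1) 3⟩

/-- The Steinhaus–Moser functions `m_k` for finite `k`. -/
def mSMfin : ℕ → ℕ → ℕ
  | 0, n => n ^ n
  | k + 1, n => (mSMfin k)^[n] n

/-- The Steinhaus–Moser functions `m_{ω+k}`; `mSMomega 0 = m_ω` with `m_ω(n) = m_n(n)`. -/
def mSMomega : ℕ → ℕ → ℕ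
  | 0, n => mSMfin n n
  | k + 1, n => (mSMomega k)^[n] n

/-- The canonical blps `p_k` for finite `k`. -/
def pFin : ℕ → Blp
  | 0 => ⟨[[0, 1, 2], [0, 1, 2, 3]], [1, 1]⟩
  | k + 1 =>
    ⟨(pFin k).rows ++ [[0, 1, 2, (pFin k).n + 1, (pFin k).n + 2]], (pFin k).steps ++ [2]⟩

/-- The canonical blps `p_{ω+k}`. -/
def pOmegaBlp : ℕ → Blp
  | 0 => ⟨[[0, 1, 2], [0, 1, 2, 3], [0, 1, 2, 3, 4], [0, 1, 2, 3, 4, 5]], [1, 1, 2, 3]⟩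
  | k + 1 =>
    ⟨(pOmegaBlp k).rows ++ [[0, 1, 2, (pOmegaBlp k).n + 1, (pOmegaBlp k).n + 2]],
     (pOmegaBlp k).steps ++ [2]⟩

/-- The canonical blps `p_α` for `α < ω + ω`, with `Sum.inl k ↦ p_k` and
`Sum.inr k ↦ p_{ω+k}`. -/
def pSM : ℕ ⊕ ℕ → Blp
  | .inl k => pFin k
  | .inr k => pOmegaBlp k

/-- The Steinhaus–Moser functions `m_α` for `α < ω + ω`, with `Sum.inl k ↦ m_k` and
`Sum.inr k ↦ m_{ω+k}`. -/
def mSM : ℕ ⊕ ℕ → ℕ → ℕ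
  | .inl k => mSMfin k
  | .inr k => mSMomega k

/-- The canonical blp `p_α` for `α < ε₀`, built from the pattern sequence `ps(α)`. -/
def pOf (o : ONote) : Blp :=
  ⟨[[0, 1, 2], [0, 1, 2, 3]] ++
     (List.range (psO o).length).map (fun j =>
       if (psO o).getD j 0 = 0 then [0, 1, 2, j + 3, j + 4]
       else [0, 1, 2, (psO o).getD j 0 + 2, j + 3, j + 4]),
   [1, 1] ++ (psO o).map (fun t => if t = 0 then 2 else 3)⟩

/-! ## Knuth arrows and Graham's number -/

/-- Knuth's up-arrow: `knuth m a b = a ↑^m b` (with `↑^0` multiplication and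
`↑^1` exponentiation). -/
def knuth : ℕ → ℕ → ℕ → ℕ
  | 0, a, b => a * b
  | 1, a, b => a ^ b
  | _ + 2, _, 0 => 1
  | m + 2, a, b + 1 => knuth (m + 1) a (knuth (m + 2) a b)
  termination_by m _ b => (m, b)

/-- `grahamSeq k = g_{k+1}`: `g_1 = 3↑↑↑↑3`, `g_{k+1} = 3 ↑^{g_k} 3`. -/
def grahamSeq : ℕ → ℕ
  | 0 => knuth 4 3 3
  | k + 1 => knuth (grahamSeq k) 3 3

/-- Graham's number `G = g_64`. -/
def grahamNumber : ℕ := grahamSeq 63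

private lemma getLastD_eq_getD' {α : Type*} (l : List α) (d : α) :
    l.getLastD d = l.getD (l.length - 1) d := by
  rw [List.getLastD_eq_getLast?, List.getLast?_eq_getElem?, List.getD_eq_getElem?_getD]

private lemma le_negGet_one (l : List ℕ) (h : l.Chain' (· < ·)) : ∀ x ∈ l, x ≤ negGet l 1 := by
  induction l with
  | nil => simp
  | cons y ys ih =>
    intro x hx
    cases ys with
    | nil =>
      simp only [List.mem_singleton] at hx
      simp [negGet, hx]
    | cons z zs =>
      obtain ⟨h1, h2⟩ := List.isChain_cons_cons.mp h
      have hng : negGet (y :: z :: zs) 1 = negGet (z :: zs) 1 := by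
        simp [negGet]
      rw [hng]
      rcases List.mem_cons.mp hx with rfl | hx
      · exact le_of_lt (lt_of_lt_of_le h1 (ih h2 z List.mem_cons_self))
      · exact ih h2 x hx

/-- If the last row of `p` has length 3 and nonzero first entry `a`,
then `p` is copyable, the copied rows are rows `a, …, n−1`, and each copied row
preserves entries `< a` and increases the other entries by `n − a`. -/
theorem copyable_of_short_last_row :
    ∀ p : Blp, p.IsValid → 3 ≤ p.n → p.lastRow.length = 3 → p.lastRow.headD 0 ≠ 0 →
      p.Copyable ∧ p.copyA = p.lastRow.headD 0 ∧ p.copyB = p.n - 1 ∧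
      ∀ i, p.lastRow.headD 0 ≤ i → i ≤ p.n - 1 →
        (p.Copied).rowOf (p.n + (i - p.lastRow.headD 0)) =
          (p.rowOf i).map (fun x =>
            if x < p.lastRow.headD 0 then x else x + (p.n - p.lastRow.headD 0)) := by
  intro p hval hn3 hlen ha0
  obtain ⟨hn2, hsl, hrow1, hrow2, hrows⟩ := hval
  have hlast : p.lastRow = p.rowOf p.n := by
    unfold Blp.lastRow Blp.rowOf
    rw [getLastD_eq_getD']
    rfl
  obtain ⟨x0, x1, x2, he⟩ := List.length_eq_three.mp hlen
  obtain ⟨hc, hlen3, hng2, hng1, hodd, -, -⟩ := hrows p.n (by omega) le_rfl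
  rw [← hlast, he] at hc hng2 hng1 hodd
  have hx1 : x1 = p.n := by simpa [negGet] using hng2
  have hx0n : x0 < p.n := by
    have := (List.isChain_cons_cons.mp hc).1
    omega
  have ha : p.lastRow.headD 0 = x0 := by rw [he]; rfl
  rw [ha] at ha0 ⊢
  have hx0 : 1 ≤ x0 := Nat.one_le_iff_ne_zero.mpr ha0
  -- last step is 1
  have hstep : p.lastStep = 1 := by
    have h1 : p.lastStep = p.stepOf p.n := by
      unfold Blp.lastStep Blp.stepOf
      rw [getLastD_eq_getD', hsl]
    rw [h1, hodd (by simp [Nat.odd_iff])]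
    simp
  have hA : p.copyA = x0 := by
    unfold Blp.copyA
    rw [hstep, he]
    rfl
  have hB : p.copyB = p.n - 1 := by
    unfold Blp.copyB
    rw [hstep, he]
    simp [negGet, hx1]
  -- bound on entries of valid rows
  have hentry : ∀ j, 1 ≤ j → j ≤ p.n → ∀ x ∈ p.rowOf j, x ≤ j + 1 := by
    intro j hj1 hj2 x hx
    obtain ⟨hcj, -, -, hngj, -, -, -⟩ := hrows j hj1 hj2
    have := le_negGet_one _ hcj x hx
    omega
  have hcopy : p.Copyable := by
    refine ⟨hn3, fun i hi => ?_⟩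
    rw [hA, hB] at hi
    refine ⟨?_, ?_, ?_, ?_⟩
    · rw [hstep, he]; simp [negGet]; omega
    · rw [hstep, he]; simp
    · intro x hx
      rw [hA] at hx
      have := hentry (x0 + i) (by omega) (by omega) x hx
      rw [hstep, he]
      simp only [negGet, List.length_cons, List.length_nil]
      norm_num
      omega
    · intro x hx h1 h2
      rw [hstep, he] at h2
      rw [he] at h1
      simp [negGet] at h2
      simp at h1
      omega
  refine ⟨hcopy, by rw [hA], by rw [hB], ?_⟩
  intro i hi1 hi2
  -- compute the copied row
  unfold Blp.Copied Blp.rowOf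
  rw [hA, hB]
  have hdl : p.rows.dropLast.length = p.n - 1 := by
    rw [List.length_dropLast]; rfl
  rw [List.getD_append_right _ _ _ _ (by omega)]
  rw [hdl]
  have hidx : p.n + (i - x0) - 1 - (p.n - 1) = i - x0 := by omega
  rw [hidx]
  have hget : ∀ f : ℕ → List ℕ,
      ((List.range (p.n - 1 - x0 + 1)).map f).getD (i - x0) [] = f (i - x0) := by
    intro f
    rw [List.getD_eq_getElem _ _ (by simp; omega), List.getElem_map, List.getElem_range]
  rw [hget]
  have hji : x0 + (i - x0) = i := by omega
  rw [hji]
  unfold apF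
  refine List.map_congr_left fun x hx => ?_
  have hxle := hentry i (by omega) (by omega) x hx
  simp only [apEntry, hstep, he]
  simp only [negGet, he]
  simp only [List.headD_cons, List.length_cons, List.length_nil]
  norm_num
  split_ifs <;> omega
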